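/- Let A = F_2[ζ_1, ζ_2, ...] be the polynomial algebra over F_2 on generators ζ_i for i ≥ 1, with ζ_0 = 1 by convention. Let ψ : A → A ⊗ A be the F_2-algebra homomorphism determined by ψ(ζ_i) = Σ_{k=0}^{i} ζ_{i-k}^{2^k} ⊗ ζ_k. Then ψ is coassociative: (ψ ⊗ id) ∘ ψ = (id ⊗ ψ) ∘ ψ. -/

import Mathlib

noncomputable section
open scoped TensorProduct

/-- The field with two elements. -/
abbrev F2 := ZMod 2

/-- The mod-2 dual Steenrod algebra `A = F_2[ζ_1, ζ_2, …]`, where `X i` represents `ζ_{i+1}`. -/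
abbrev DualSteenrod := MvPolynomial ℕ F2

/-- The Milnor generators `ζ_i`, with the convention `ζ_0 = 1`. -/
def zeta : ℕ → DualSteenrod
  | 0 => 1
  | (i + 1) => MvPolynomial.X i

/-- The Milnor coproduct `ψ : A → A ⊗ A`, the `F_2`-algebra homomorphism determined by
`ψ(ζ_i) = Σ_{k=0}^{i} ζ_{i-k}^{2^k} ⊗ ζ_k`. -/
def psi : DualSteenrod →ₐ[F2] DualSteenrod ⊗[F2] DualSteenrod :=
  MvPolynomial.aeval fun i =>
    ∑ k ∈ Finset.range (i + 2), ((zeta (i + 1 - k)) ^ (2 ^ k)) ⊗ₜ[F2] (zeta k)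

/-! Since `ψ` is a ring map in characteristic 2, it commutes with the Frobenius, so
`ψ(ζ_a ^ 2 ^ j) = Σ_{c+d=a} ζ_c ^ 2 ^ (d+j) ⊗ ζ_d ^ 2 ^ j`. Both sides of coassociativity
then expand on `ζ_n` to the sum of `ζ_a ^ 2 ^ (b+c) ⊗ ζ_b ^ 2 ^ c ⊗ ζ_c` over `a + b + c = n`,
grouped as `(a + b) + c` on the left and as `a + (b + c)` on the right. -/

open Finset MvPolynomial TensorProduct

theorem Finset.sum_antidiagonal_assoc {A M : Type*} [AddCommMonoid A] [HasAntidiagonal A]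
    [AddCommMonoid M] (n : A) (f : A → A → A → M) :
    ∑ p ∈ antidiagonal n, ∑ q ∈ antidiagonal p.1, f q.1 q.2 p.2 =
      ∑ p ∈ antidiagonal n, ∑ q ∈ antidiagonal p.2, f p.1 q.1 q.2 := by
  simp only [sum_sigma']
  apply sum_nbij' (fun ⟨⟨_, c⟩, ⟨a, b⟩⟩ ↦ ⟨(a, b + c), (b, c)⟩)
    (fun ⟨⟨a, _⟩, ⟨b, c⟩⟩ ↦ ⟨(a + b, c), (a, b)⟩) <;> aesop (add simp [add_assoc])

instance : CharP (DualSteenrod ⊗[F2] DualSteenrod) 2 := charP_of_injective_algebraMap' F2 2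

theorem psi_zeta (n : ℕ) :
    psi (zeta n) = ∑ p ∈ antidiagonal n, (zeta p.1 ^ 2 ^ p.2) ⊗ₜ[F2] zeta p.2 := by
  cases n with
  | zero => simp [zeta, Algebra.TensorProduct.one_def]
  | succ i =>
    rw [← Nat.sum_antidiagonal_swap, Nat.sum_antidiagonal_eq_sum_range_succ_mk]
    simp [zeta, psi]

theorem psi_zeta_pow (n j : ℕ) :
    psi (zeta n ^ 2 ^ j) =
      ∑ p ∈ antidiagonal n, (zeta p.1 ^ 2 ^ (p.2 + j)) ⊗ₜ[F2] (zeta p.2 ^ 2 ^ j) := by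
  simp only [map_pow, psi_zeta, sum_pow_char_pow, Algebra.TensorProduct.tmul_pow, pow_add,
    pow_mul]

/-- The coproduct of the dual Steenrod algebra is coassociative. -/
theorem psi_coassoc :
    (Algebra.TensorProduct.assoc F2 F2 F2 DualSteenrod DualSteenrod DualSteenrod).toAlgHom.comp
        ((Algebra.TensorProduct.map psi (AlgHom.id F2 DualSteenrod)).comp psi)
      = (Algebra.TensorProduct.map (AlgHom.id F2 DualSteenrod) psi).comp psi := by
  refine algHom_ext fun i ↦ ?_
  rw [AlgHom.comp_apply, AlgHom.comp_apply, AlgHom.comp_apply,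
    show (X i : DualSteenrod) = zeta (i + 1) from rfl]
  simp only [psi_zeta, map_sum, Algebra.TensorProduct.map_tmul, AlgHom.id_apply, psi_zeta_pow,
    sum_tmul, tmul_sum, AlgEquiv.coe_toAlgHom, Algebra.TensorProduct.assoc_tmul]
  refine (sum_antidiagonal_assoc (i + 1) fun a b c ↦
    (zeta a ^ 2 ^ (b + c)) ⊗ₜ[F2] ((zeta b ^ 2 ^ c) ⊗ₜ[F2] zeta c)).trans
    (sum_congr rfl fun p _ ↦ sum_congr rfl fun q hq ↦ ?_)
  rw [mem_antidiagonal.1 hq]
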